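/- arXiv:2410.23777 — 2 statements merged into one kernel-verified Lean document; each statement's English description precedes it below -/
import Mathlib

section
/- Let f : ℝ → ℝ be C², let R ∈ (-1,1) and M > 0 with f(M) > 0, and let U be a C² solution of the model ODE (1-r²)·U''(r) - 2r·U'(r) + f(U(r)) = 0 on an open interval I ⊆ (-1,1) containing R, with U(R) = M and U'(R) = 0. Set W(r) = (1-r²)·U'(r)². Then, as r → R with r > R, W(r) = 2·f(M)·(M-U(r)) + (4R·√(2·f(M))/(3·√(1-R²)))·(M-U(r))^{3/2} + O((M-U(r))²), and as r → R with r < R, W(r) = 2·f(M)·(M-U(r)) - (4R·√(2·f(M))/(3·√(1-R²)))·(M-U(r))^{3/2} + O((M-U(r))²). -/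
/-!
Since `f` is `C²`, solving the ODE for `U''` bootstraps `U''` to `C²`, so `U` has a third-order
Taylor expansion at `R` with remainder `O((r - R)⁴)`. The ODE and its derivative at `R` give
`U''(R) = -c` with `c = f(M) / (1 - R²)` and `(1 - R²) U'''(R) = 4 R U''(R)`. Substituting,
`W - 2 f(M) (M - U) = (2/3) R c² (r - R)³ + O((r - R)⁴)`, while
`M - U = (c/2) (r - R)² + O((r - R)³)` gives `(M - U)^{3/2} = (c/2)^{3/2} |r - R|³ + O((r - R)⁴)`
and `(r - R)⁴ = O((M - U)²)`. The cubic term changes sign with `r - R`.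
-/

open Set Asymptotics Filter Topology

lemma isLittleO_sub_pow_sub_pow (x₀ : ℝ) {m n : ℕ} (h : m < n) :
    (fun x => (x - x₀) ^ n) =o[𝓝 x₀] fun x => (x - x₀) ^ m :=
  (isLittleO_pow_pow h).comp_tendsto (tendsto_sub_nhds_zero_iff.2 tendsto_id)

lemma isBigO_pow_succ_of_hasDerivAt {g g' : ℝ → ℝ} {x₀ : ℝ} {n : ℕ}
    (hg : ∀ᶠ x in 𝓝 x₀, HasDerivAt g (g' x) x) (hg₀ : g x₀ = 0)
    (hg' : g' =O[𝓝 x₀] fun x => (x - x₀) ^ n) :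
    g =O[𝓝 x₀] fun x => (x - x₀) ^ (n + 1) := by
  obtain ⟨C, hC, hC'⟩ := hg'.exists_nonneg
  obtain ⟨δ, hδ, hball⟩ := Metric.eventually_nhds_iff_ball.1 (hg.and hC'.bound)
  refine IsBigO.of_bound C ?_
  filter_upwards [Metric.ball_mem_nhds x₀ hδ] with x hx
  have hseg : uIcc x₀ x ⊆ Metric.ball x₀ δ :=
    (convex_ball x₀ δ).ordConnected.uIcc_subset (Metric.mem_ball_self hδ) hx
  have key := (convex_uIcc x₀ x).norm_image_sub_le_of_norm_hasDerivWithin_le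
    (fun y hy => (hball y (hseg hy)).1.hasDerivWithinAt) (C := C * |x - x₀| ^ n)
    (fun y hy => ?_) left_mem_uIcc right_mem_uIcc
  · rw [hg₀, sub_zero, Real.norm_eq_abs] at key
    rw [norm_pow, Real.norm_eq_abs, pow_succ, ← mul_assoc]
    exact key
  · calc ‖g' y‖ ≤ C * ‖(y - x₀) ^ n‖ := (hball y (hseg hy)).2
      _ ≤ C * |x - x₀| ^ n := by
        rw [norm_pow, Real.norm_eq_abs]
        exact mul_le_mul_of_nonneg_left
          (pow_le_pow_left₀ (abs_nonneg _) (abs_sub_left_of_mem_uIcc hy) n) hC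

lemma taylor_isBigO_of_hasDerivAt {u u₁ u₂ u₃ : ℝ → ℝ} {x₀ : ℝ}
    (hu : ∀ᶠ x in 𝓝 x₀, HasDerivAt u (u₁ x) x) (hu₁ : ∀ᶠ x in 𝓝 x₀, HasDerivAt u₁ (u₂ x) x)
    (hu₂ : ∀ᶠ x in 𝓝 x₀, HasDerivAt u₂ (u₃ x) x)
    (hu₃ : (fun x => u₃ x - u₃ x₀) =O[𝓝 x₀] fun x => x - x₀) :
    (fun x => u₁ x - (u₁ x₀ + u₂ x₀ * (x - x₀) + u₃ x₀ / 2 * (x - x₀) ^ 2))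
        =O[𝓝 x₀] (fun x => (x - x₀) ^ 3) ∧
    (fun x => u x - (u x₀ + u₁ x₀ * (x - x₀) + u₂ x₀ / 2 * (x - x₀) ^ 2
        + u₃ x₀ / 6 * (x - x₀) ^ 3)) =O[𝓝 x₀] (fun x => (x - x₀) ^ 4) := by
  have hd : ∀ x, HasDerivAt (fun y => y - x₀) 1 x := fun x => (hasDerivAt_id x).sub_const x₀
  have h₂ : (fun x => u₂ x - (u₂ x₀ + u₃ x₀ * (x - x₀))) =O[𝓝 x₀] fun x => (x - x₀) ^ 2 := by
    refine isBigO_pow_succ_of_hasDerivAt (n := 1) ?_ (by simp) (by simpa using hu₃)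
    filter_upwards [hu₂] with x hx
    exact (hx.sub (((hd x).const_mul (u₃ x₀)).const_add (u₂ x₀))).congr_deriv (by ring)
  have h₁ : (fun x => u₁ x - (u₁ x₀ + u₂ x₀ * (x - x₀) + u₃ x₀ / 2 * (x - x₀) ^ 2))
      =O[𝓝 x₀] fun x => (x - x₀) ^ 3 := by
    refine isBigO_pow_succ_of_hasDerivAt ?_ (by simp) h₂
    filter_upwards [hu₁] with x hx
    exact (hx.sub ((((hd x).const_mul (u₂ x₀)).const_add (u₁ x₀)).add
      (((hd x).pow 2).const_mul (u₃ x₀ / 2)))).congr_deriv (by ring)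
  refine ⟨h₁, isBigO_pow_succ_of_hasDerivAt ?_ (by simp) h₁⟩
  filter_upwards [hu] with x hx
  exact (hx.sub (((((hd x).const_mul (u₁ x₀)).const_add (u x₀)).add
    (((hd x).pow 2).const_mul (u₂ x₀ / 2))).add (((hd x).pow 3).const_mul (u₃ x₀ / 6)))).congr_deriv
    (by ring)

lemma contDiffOn_succ_of_hasDerivAt {u u' : ℝ → ℝ} {s : Set ℝ} {n : ℕ} (hs : IsOpen s)
    (hu : ∀ x ∈ s, HasDerivAt u (u' x) x) (hu' : ContDiffOn ℝ n u' s) :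
    ContDiffOn ℝ (n + 1) u s :=
  (contDiffOn_succ_iff_deriv_of_isOpen hs).2
    ⟨fun x hx => (hu x hx).differentiableAt.differentiableWithinAt, by simp,
      hu'.congr fun x hx => (hu x hx).deriv⟩

lemma abs_rpow_three_halves_sub_le {x y : ℝ} (hx : 0 ≤ x) (hy : 0 ≤ y) :
    |x ^ (3 / 2 : ℝ) - y ^ (3 / 2 : ℝ)| ≤ (√x + √y) * |x - y| := by
  rw [Real.rpow_div_two_eq_sqrt 3 hx, Real.rpow_div_two_eq_sqrt 3 hy]
  have hx' : x = √x ^ 2 := (Real.sq_sqrt hx).symm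
  have hy' : y = √y ^ 2 := (Real.sq_sqrt hy).symm
  set a := √x
  set b := √y
  have ha : 0 ≤ a := Real.sqrt_nonneg x
  have hb : 0 ≤ b := Real.sqrt_nonneg y
  norm_cast
  calc |a ^ 3 - b ^ 3| = |a - b| * (a ^ 2 + a * b + b ^ 2) := by
        rw [show a ^ 3 - b ^ 3 = (a - b) * (a ^ 2 + a * b + b ^ 2) by ring, abs_mul,
          abs_of_nonneg (by positivity : 0 ≤ a ^ 2 + a * b + b ^ 2)]
    _ ≤ |a - b| * (a + b) ^ 2 := by gcongr; nlinarith [mul_nonneg ha hb]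
    _ = (a + b) * |x - y| := by
        rw [hx', hy', show a ^ 2 - b ^ 2 = (a - b) * (a + b) by ring, abs_mul,
          abs_of_nonneg (add_nonneg ha hb)]
        ring

lemma rpow_three_halves_sub_isBigO {α : Type*} {l : Filter α} {v w g : α → ℝ}
    (hv : 0 ≤ᶠ[l] v) (hw : 0 ≤ᶠ[l] w) (hv₂ : v =O[l] fun x => g x ^ 2)
    (hw₂ : w =O[l] fun x => g x ^ 2) (hvw : (fun x => v x - w x) =O[l] fun x => g x ^ 3) :
    (fun x => v x ^ (3 / 2 : ℝ) - w x ^ (3 / 2 : ℝ)) =O[l] fun x => g x ^ 4 := by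
  have hsqrt : ∀ z : α → ℝ, z =O[l] (fun x => g x ^ 2) → (fun x => √(z x)) =O[l] g := fun z hz =>
    isBigO_abs_right.1 <| (hz.sqrt (.of_forall fun x => sq_nonneg (g x))).congr_right
      fun x => Real.sqrt_sq_eq_abs (g x)
  have hprod := ((hsqrt v hv₂).add (hsqrt w hw₂)).mul hvw
  refine (IsBigO.of_bound 1 ?_).trans (hprod.congr_right fun x => by ring)
  filter_upwards [hv, hw] with x hvx hwx
  rw [one_mul, Real.norm_eq_abs, Real.norm_eq_abs, abs_mul,
    abs_of_nonneg (add_nonneg (Real.sqrt_nonneg _) (Real.sqrt_nonneg _))]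
  exact abs_rpow_three_halves_sub_le hvx hwx

lemma eventually_half_le_of_isBigO {v : ℝ → ℝ} {R k : ℝ} (hk : 0 < k)
    (hv : (fun r => v r - k * (r - R) ^ 2) =O[𝓝 R] fun r => (r - R) ^ 3) :
    ∀ᶠ r in 𝓝 R, k / 2 * (r - R) ^ 2 ≤ v r := by
  filter_upwards [(hv.trans_isLittleO (isLittleO_sub_pow_sub_pow R (by norm_num : 2 < 3))).bound
    (half_pos hk)] with r hr
  rw [Real.norm_eq_abs, Real.norm_eq_abs, abs_of_nonneg (sq_nonneg (r - R))] at hr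
  linarith [(abs_le.1 hr).1]

lemma pow_four_isBigO_sq_of_le {α : Type*} {l : Filter α} {v g : α → ℝ} {k : ℝ} (hk : 0 < k)
    (h : ∀ᶠ x in l, k * g x ^ 2 ≤ v x) : (fun x => g x ^ 4) =O[l] fun x => v x ^ 2 := by
  refine IsBigO.of_bound (1 / k ^ 2) ?_
  filter_upwards [h] with x hx
  have hsq : (k * g x ^ 2) ^ 2 ≤ v x ^ 2 := pow_le_pow_left₀ (by positivity) hx 2
  rw [Real.norm_eq_abs, Real.norm_eq_abs, abs_of_nonneg (by positivity),
    abs_of_nonneg (sq_nonneg _), div_mul_eq_mul_div, le_div_iff₀ (by positivity)]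
  linarith

lemma coeff_mul_rpow_three_halves {R c : ℝ} (hR : 0 < 1 - R ^ 2) (hc : 0 < c) (h : ℝ) :
    4 * R * √(2 * ((1 - R ^ 2) * c)) / (3 * √(1 - R ^ 2)) * (c / 2 * h ^ 2) ^ (3 / 2 : ℝ)
      = 2 / 3 * R * c ^ 2 * |h| ^ 3 := by
  have h1 : √(2 * ((1 - R ^ 2) * c)) = √(1 - R ^ 2) * √(2 * c) := by
    rw [← Real.sqrt_mul hR.le]; ring_nf
  have h2 : √(c / 2 * h ^ 2) = √(c / 2) * |h| := by
    rw [Real.sqrt_mul (by positivity), Real.sqrt_sq_eq_abs]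
  have h3 : √(2 * c) * √(c / 2) = c := by
    rw [← Real.sqrt_mul (by positivity), show 2 * c * (c / 2) = c ^ 2 by ring, Real.sqrt_sq hc.le]
  have h4 : √(c / 2) ^ 2 = c / 2 := Real.sq_sqrt (by positivity)
  rw [Real.rpow_div_two_eq_sqrt 3 (by positivity), h1, h2]
  norm_cast
  field_simp
  linear_combination (4 * R * |h| ^ 3 * √(c / 2) ^ 2) * h3 + (4 * R * |h| ^ 3 * c) * h4

section ModelODE

variable {f U U' U'' : ℝ → ℝ} {s : Set ℝ}

lemma one_sub_sq_pos_of_mem_Ioo {r : ℝ} (hr : r ∈ Ioo (-1 : ℝ) 1) : 0 < 1 - r ^ 2 := by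
  nlinarith [hr.1, hr.2]

lemma contDiffOn_modelODE_rhs {n : ℕ} (hn : n ≤ 2) (hf : ContDiff ℝ 2 f)
    (hs : s ⊆ Ioo (-1) 1) (hU : ContDiffOn ℝ n U s) (hU' : ContDiffOn ℝ n U' s) :
    ContDiffOn ℝ n (fun r => (2 * r * U' r - f (U r)) / (1 - r ^ 2)) s :=
  (((contDiffOn_const.mul contDiffOn_id).mul hU').sub
    ((hf.of_le (by exact_mod_cast hn)).comp_contDiffOn hU)).div
    (contDiffOn_const.sub (contDiffOn_id.pow 2))
    fun r hr => (one_sub_sq_pos_of_mem_Ioo (hs hr)).ne'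

lemma eqOn_modelODE_rhs (hs : s ⊆ Ioo (-1) 1)
    (hODE : ∀ r ∈ s, (1 - r ^ 2) * U'' r - 2 * r * U' r + f (U r) = 0) :
    EqOn U'' (fun r => (2 * r * U' r - f (U r)) / (1 - r ^ 2)) s :=
  fun r hr => eq_div_of_mul_eq (one_sub_sq_pos_of_mem_Ioo (hs hr)).ne'
    (by linear_combination hODE r hr)

lemma contDiffOn_two_secondDeriv_of_modelODE (hf : ContDiff ℝ 2 f) (hs : IsOpen s)
    (hs₁ : s ⊆ Ioo (-1) 1)
    (hU : ∀ r ∈ s, HasDerivAt U (U' r) r) (hU' : ∀ r ∈ s, HasDerivAt U' (U'' r) r)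
    (hU''cont : ContinuousOn U'' s)
    (hODE : ∀ r ∈ s, (1 - r ^ 2) * U'' r - 2 * r * U' r + f (U r) = 0) :
    ContDiffOn ℝ 2 U'' s := by
  have hrhs := eqOn_modelODE_rhs hs₁ hODE
  have hU'₁ : ContDiffOn ℝ 1 U' s := by
    simpa using contDiffOn_succ_of_hasDerivAt (n := 0) hs hU' (contDiffOn_zero.2 hU''cont)
  have hU₂ : ContDiffOn ℝ 2 U s := contDiffOn_succ_of_hasDerivAt (n := 1) hs hU hU'₁
  have hU''₁ : ContDiffOn ℝ 1 U'' s :=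
    (contDiffOn_modelODE_rhs (n := 1) one_le_two hf hs₁ (hU₂.of_le one_le_two) hU'₁).congr hrhs
  have hU'₂ : ContDiffOn ℝ 2 U' s := contDiffOn_succ_of_hasDerivAt (n := 1) hs hU' hU''₁
  exact (contDiffOn_modelODE_rhs (n := 2) le_rfl hf hs₁ hU₂ hU'₂).congr hrhs

lemma thirdDeriv_eq_of_modelODE {R U₃ : ℝ} (hf : Differentiable ℝ f) (hs : s ∈ 𝓝 R)
    (hU : HasDerivAt U (U' R) R) (hU' : HasDerivAt U' (U'' R) R) (hU'' : HasDerivAt U'' U₃ R)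
    (hODE : ∀ r ∈ s, (1 - r ^ 2) * U'' r - 2 * r * U' r + f (U r) = 0) (hU'R : U' R = 0) :
    (1 - R ^ 2) * U₃ = 4 * R * U'' R := by
  have hlhs := ((((hasDerivAt_id R).pow 2).const_sub 1).mul hU'').sub
    (((hasDerivAt_id R).const_mul 2).mul hU') |>.add ((hf (U R)).hasDerivAt.comp R hU)
  have hzero : HasDerivAt (fun r => (1 - r ^ 2) * U'' r - 2 * r * U' r + f (U r)) 0 R :=
    (hasDerivAt_const R 0).congr_of_eventuallyEq (eventually_of_mem hs hODE)
  have := hlhs.unique hzero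
  simp only [hU'R, id_eq, Pi.pow_apply] at this
  linear_combination this

end ModelODE

lemma gradNormSq_sub_cubic_isBigO {u u₁ : ℝ → ℝ} {R M c q : ℝ}
    (hq : (1 - R ^ 2) * q = -4 * R * c)
    (h₁ : (fun r => u₁ r - (-c * (r - R) + q / 2 * (r - R) ^ 2)) =O[𝓝 R] fun r => (r - R) ^ 3)
    (h₀ : (fun r => u r - (M + -c / 2 * (r - R) ^ 2 + q / 6 * (r - R) ^ 3))
      =O[𝓝 R] fun r => (r - R) ^ 4) :
    (fun r => (1 - r ^ 2) * u₁ r ^ 2 - 2 * ((1 - R ^ 2) * c) * (M - u r)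
        - 2 / 3 * R * c ^ 2 * (r - R) ^ 3) =O[𝓝 R] fun r => (r - R) ^ 4 := by
  set P : ℝ → ℝ := fun r => -c * (r - R) + q / 2 * (r - R) ^ 2
  set Q : ℝ → ℝ := fun r => (1 - R ^ 2) * q ^ 2 / 4 + 2 * R * c * q - c ^ 2
    + (c * q - R * q ^ 2 / 2) * (r - R) - q ^ 2 / 4 * (r - R) ^ 2
  have hP : P =O[𝓝 R] fun r => r - R := by
    simpa [P] using (by fun_prop : DifferentiableAt ℝ P R).isBigO_sub
  have hsum : (fun r => u₁ r + P r) =O[𝓝 R] fun r => r - R := by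
    have h₁' := h₁.trans (isLittleO_sub_pow_sub_pow R (by norm_num : 1 < 3)).isBigO
    simp only [pow_one] at h₁'
    exact (h₁'.add (hP.const_mul_left 2)).congr_left fun r => by ring
  have hbound : (fun r => 1 - r ^ 2) =O[𝓝 R] fun _ => (1 : ℝ) :=
    (by fun_prop : Continuous fun r : ℝ => 1 - r ^ 2).continuousAt.isBigO_one ℝ
  have hQ : Q =O[𝓝 R] fun _ => (1 : ℝ) := (by fun_prop : Continuous Q).continuousAt.isBigO_one ℝ
  have hsplit : ∀ r, (1 - r ^ 2) * u₁ r ^ 2 - 2 * ((1 - R ^ 2) * c) * (M - u r)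
      - 2 / 3 * R * c ^ 2 * (r - R) ^ 3
      = (1 - r ^ 2) * (u₁ r - P r) * (u₁ r + P r)
        + 2 * ((1 - R ^ 2) * c) * (u r - (M + -c / 2 * (r - R) ^ 2 + q / 6 * (r - R) ^ 3))
        + (r - R) ^ 4 * Q r := fun r => by
    -- the `(r - R)²` terms cancel identically, the `(r - R)³` terms by `hq`
    simp only [P, Q]
    linear_combination (-2 / 3 * c * (r - R) ^ 3) * hq
  have hquad : (fun r => (1 - r ^ 2) * (u₁ r - P r) * (u₁ r + P r))
      =O[𝓝 R] fun r => (r - R) ^ 4 :=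
    ((hbound.mul h₁).mul hsum).congr_right fun r => by ring
  have hrest : (fun r => (r - R) ^ 4 * Q r) =O[𝓝 R] fun r => (r - R) ^ 4 :=
    ((isBigO_refl _ _).mul hQ).congr_right fun r => mul_one _
  exact ((hquad.add (h₀.const_mul_left _)).add hrest).congr_left fun r => (hsplit r).symm

lemma gradNormSq_expansion_of_taylor {u u₁ : ℝ → ℝ} {R M F c q : ℝ} (hR : 0 < 1 - R ^ 2)
    (hc : 0 < c) (hF : F = (1 - R ^ 2) * c) (hq : (1 - R ^ 2) * q = -4 * R * c)
    (h₁ : (fun r => u₁ r - (-c * (r - R) + q / 2 * (r - R) ^ 2)) =O[𝓝 R] fun r => (r - R) ^ 3)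
    (h₀ : (fun r => u r - (M + -c / 2 * (r - R) ^ 2 + q / 6 * (r - R) ^ 3))
      =O[𝓝 R] fun r => (r - R) ^ 4) :
    ((fun r => (1 - r ^ 2) * (u₁ r) ^ 2 - 2 * F * (M - u r)
        - (4 * R * √(2 * F) / (3 * √(1 - R ^ 2))) * (M - u r) ^ ((3 : ℝ) / 2))
      =O[𝓝[>] R] fun r => (M - u r) ^ 2) ∧
    ((fun r => (1 - r ^ 2) * (u₁ r) ^ 2 - 2 * F * (M - u r)
        + (4 * R * √(2 * F) / (3 * √(1 - R ^ 2))) * (M - u r) ^ ((3 : ℝ) / 2))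
      =O[𝓝[<] R] fun r => (M - u r) ^ 2) := by
  subst hF
  set C := 4 * R * √(2 * ((1 - R ^ 2) * c)) / (3 * √(1 - R ^ 2))
  have hv : (fun r => (M - u r) - c / 2 * (r - R) ^ 2) =O[𝓝 R] fun r => (r - R) ^ 3 :=
    ((h₀.trans (isLittleO_sub_pow_sub_pow R (by norm_num : 3 < 4)).isBigO).add
      (isBigO_const_mul_self (q / 6) _ _)).neg_left.congr_left fun r => by ring
  have hlow := eventually_half_le_of_isBigO (half_pos hc) hv
  have hv₀ : 0 ≤ᶠ[𝓝 R] fun r => M - u r := hlow.mono fun r hr =>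
    (mul_nonneg (by positivity) (sq_nonneg _)).trans hr
  have hv₂ : (fun r => M - u r) =O[𝓝 R] fun r => (r - R) ^ 2 :=
    ((hv.trans (isLittleO_sub_pow_sub_pow R (by norm_num : 2 < 3)).isBigO).add
      (isBigO_const_mul_self (c / 2) _ _)).congr_left fun r => by ring
  have h32 := rpow_three_halves_sub_isBigO hv₀ (.of_forall fun r => by positivity) hv₂
    (isBigO_const_mul_self _ _ _) hv
  have hE := gradNormSq_sub_cubic_isBigO hq h₁ h₀
  have h4 := pow_four_isBigO_sq_of_le (half_pos (half_pos hc)) hlow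
  constructor
  · refine ((hE.sub (h32.const_mul_left C)).trans h4 |>.mono nhdsWithin_le_nhds).congr' ?_ .rfl
    filter_upwards [self_mem_nhdsWithin] with r (hr : R < r)
    have := coeff_mul_rpow_three_halves hR hc (r - R)
    rw [abs_of_pos (sub_pos.2 hr)] at this
    linear_combination this
  · refine ((hE.add (h32.const_mul_left C)).trans h4 |>.mono nhdsWithin_le_nhds).congr' ?_ .rfl
    filter_upwards [self_mem_nhdsWithin] with r (hr : r < R)
    have := coeff_mul_rpow_three_halves hR hc (r - R)
    rw [abs_of_neg (sub_neg.2 hr)] at this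
    linear_combination -this

theorem stmt_14_general (f : ℝ → ℝ) (hf : ContDiff ℝ 2 f)
    (R M : ℝ) (hR : R ∈ Ioo (-1 : ℝ) 1) (hfM : 0 < f M)
    (a b : ℝ) (hab : Ioo a b ⊆ Ioo (-1 : ℝ) 1) (hRab : R ∈ Ioo a b)
    (U U' U'' : ℝ → ℝ)
    (hU : ∀ r ∈ Ioo a b, HasDerivAt U (U' r) r)
    (hU' : ∀ r ∈ Ioo a b, HasDerivAt U' (U'' r) r)
    (hU''cont : ContinuousOn U'' (Ioo a b))
    (hODE : ∀ r ∈ Ioo a b, (1 - r ^ 2) * U'' r - 2 * r * U' r + f (U r) = 0)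
    (hUR : U R = M) (hU'R : U' R = 0) :
    ((fun r => (1 - r ^ 2) * (U' r) ^ 2 - 2 * f M * (M - U r)
        - (4 * R * Real.sqrt (2 * f M) / (3 * Real.sqrt (1 - R ^ 2)))
          * (M - U r) ^ ((3 : ℝ) / 2))
      =O[nhdsWithin R (Ioo R b)] fun r => (M - U r) ^ 2) ∧
    ((fun r => (1 - r ^ 2) * (U' r) ^ 2 - 2 * f M * (M - U r)
        + (4 * R * Real.sqrt (2 * f M) / (3 * Real.sqrt (1 - R ^ 2)))
          * (M - U r) ^ ((3 : ℝ) / 2))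
      =O[nhdsWithin R (Ioo a R)] fun r => (M - U r) ^ 2) := by
  have hs : IsOpen (Ioo a b) := isOpen_Ioo
  have hRs : Ioo a b ∈ 𝓝 R := hs.mem_nhds hRab
  have h1R : 0 < 1 - R ^ 2 := one_sub_sq_pos_of_mem_Ioo hR
  have hU''₂ := contDiffOn_two_secondDeriv_of_modelODE hf hs hab hU hU' hU''cont hODE
  have hU₃ : ∀ r ∈ Ioo a b, HasDerivAt U'' (deriv U'' r) r := fun r hr =>
    ((hU''₂.differentiableOn two_ne_zero r hr).differentiableAt (hs.mem_nhds hr)).hasDerivAt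
  have hU₃R : (fun r => deriv U'' r - deriv U'' R) =O[𝓝 R] fun r => r - R :=
    (((hU''₂.deriv_of_isOpen hs le_rfl).contDiffAt hRs).differentiableAt one_ne_zero).isBigO_sub
  have hF : f M = (1 - R ^ 2) * -U'' R := by
    have := hODE R hRab
    rw [hUR, hU'R] at this
    linear_combination this
  have hc : 0 < -U'' R := pos_of_mul_pos_right (hF ▸ hfM) h1R.le
  have hq := thirdDeriv_eq_of_modelODE (hf.differentiable two_ne_zero) hRs (hU R hRab)
    (hU' R hRab) (hU₃ R hRab) hODE hU'R
  obtain ⟨h₁, h₀⟩ := taylor_isBigO_of_hasDerivAt (eventually_of_mem hRs hU)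
    (eventually_of_mem hRs hU') (eventually_of_mem hRs hU₃) hU₃R
  obtain ⟨hright, hleft⟩ := gradNormSq_expansion_of_taylor h1R hc hF (by rw [hq]; ring)
    (by simpa only [hU'R, zero_add, neg_neg] using h₁)
    (by simpa only [hUR, hU'R, zero_mul, add_zero, neg_neg] using h₀)
  exact ⟨hright.mono (nhdsWithin_mono _ Ioo_subset_Ioi_self),
    hleft.mono (nhdsWithin_mono _ Ioo_subset_Iio_self)⟩

/-- Let `f : ℝ → ℝ` be C², let `R ∈ (-1,1)` and `M > 0` with `f(M) > 0`,
and let `U` be a C² solution of the model ODE `(1-r²)·U''(r) - 2r·U'(r) + f(U(r)) = 0` on an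
open interval `I = (a,b) ⊆ (-1,1)` containing `R`, with `U(R) = M` and `U'(R) = 0`. Set
`W(r) = (1-r²)·U'(r)²`. Then, as `r → R` with `r > R`,
`W(r) = 2·f(M)·(M-U(r)) + (4R·√(2·f(M))/(3·√(1-R²)))·(M-U(r))^{3/2} + O((M-U(r))²)`,
and as `r → R` with `r < R`,
`W(r) = 2·f(M)·(M-U(r)) - (4R·√(2·f(M))/(3·√(1-R²)))·(M-U(r))^{3/2} + O((M-U(r))²)`. -/
theorem stmt_14 (f : ℝ → ℝ) (hf : ContDiff ℝ 2 f)
    (R M : ℝ) (hR : R ∈ Ioo (-1 : ℝ) 1) (hM : 0 < M) (hfM : 0 < f M)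
    (a b : ℝ) (hab : Ioo a b ⊆ Ioo (-1 : ℝ) 1) (hRab : R ∈ Ioo a b)
    (U U' U'' : ℝ → ℝ)
    (hU : ∀ r ∈ Ioo a b, HasDerivAt U (U' r) r)
    (hU' : ∀ r ∈ Ioo a b, HasDerivAt U' (U'' r) r)
    (hU''cont : ContinuousOn U'' (Ioo a b))
    (hODE : ∀ r ∈ Ioo a b, (1 - r ^ 2) * U'' r - 2 * r * U' r + f (U r) = 0)
    (hUR : U R = M) (hU'R : U' R = 0) :
    ((fun r => (1 - r ^ 2) * (U' r) ^ 2 - 2 * f M * (M - U r)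
        - (4 * R * Real.sqrt (2 * f M) / (3 * Real.sqrt (1 - R ^ 2)))
          * (M - U r) ^ ((3 : ℝ) / 2))
      =O[nhdsWithin R (Ioo R b)] fun r => (M - U r) ^ 2) ∧
    ((fun r => (1 - r ^ 2) * (U' r) ^ 2 - 2 * f M * (M - U r)
        + (4 * R * Real.sqrt (2 * f M) / (3 * Real.sqrt (1 - R ^ 2)))
          * (M - U r) ^ ((3 : ℝ) / 2))
      =O[nhdsWithin R (Ioo a R)] fun r => (M - U r) ^ 2) :=
  stmt_14_general f hf R M hR hfM a b hab hRab U U' U'' hU hU' hU''cont hODE hUR hU'R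
end

section
/- Let f : ℝ → ℝ be C¹ with f(x) > 0 for all x > 0 and f(0) ≥ 0, and let M > 0. Let (r₁, r₂, U) be an arch solution with parameters (0, M) (i.e. the critical height R equals 0). Then r₁ = -r₂ and the squared gradient norms at the two zeros coincide: (1 - r₁²)·U'(r₁)² = (1 - r₂²)·U'(r₂)². -/
open Set

/-- Arch solution with parameters `(R, M)`: numbers `r₁ < R < r₂` in `(-1,1)` and a C²
function `U : [r₁,r₂] → ℝ` (with derivative data `U'`, `U''`) satisfying the model ODE
`(1-r²)·U''(r) - 2r·U'(r) + f(U(r)) = 0` on `[r₁,r₂]`, with `U(R) = M`, `U'(R) = 0`,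
`U(r₁) = U(r₂) = 0` and `U > 0` on `(r₁,r₂)`. -/
def IsArchSolution (f : ℝ → ℝ) (R M r₁ r₂ : ℝ) (U U' U'' : ℝ → ℝ) : Prop :=
  -1 < r₁ ∧ r₁ < R ∧ R < r₂ ∧ r₂ < 1 ∧
  (∀ r ∈ Set.Icc r₁ r₂, HasDerivWithinAt U (U' r) (Set.Icc r₁ r₂) r) ∧
  (∀ r ∈ Set.Icc r₁ r₂, HasDerivWithinAt U' (U'' r) (Set.Icc r₁ r₂) r) ∧
  ContinuousOn U'' (Set.Icc r₁ r₂) ∧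
  (∀ r ∈ Set.Icc r₁ r₂, (1 - r ^ 2) * U'' r - 2 * r * U' r + f (U r) = 0) ∧
  U R = M ∧ U' R = 0 ∧ U r₁ = 0 ∧ U r₂ = 0 ∧
  (∀ r ∈ Set.Ioo r₁ r₂, 0 < U r)

/-!
Written as a first-order system for `(U, U')`, the model ODE has the right-hand side
`legendreField f`, which is `C¹` and hence locally Lipschitz on `|r| < 1`. By Cauchy–Lipschitz
uniqueness, two arch solutions with the same parameters `(R, M)` agree on their common interval,
and then their endpoints agree too: an endpoint of one inside the arch of the other would be a
zero where the other is positive.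
The ODE is invariant under `r ↦ -r`, `U' ↦ -U'`, so reflecting an arch solution with parameters
`(R, M)` gives one with parameters `(-R, M)`; for `R = 0` it is therefore the solution itself.
-/

noncomputable def legendreField (f : ℝ → ℝ) (t : ℝ) (p : ℝ × ℝ) : ℝ × ℝ :=
  (p.2, (2 * t * p.2 - f p.1) / (1 - t ^ 2))

section LegendreField

variable {f : ℝ → ℝ}

lemma contDiffOn_legendreField (hf : ContDiff ℝ 1 f) :
    ContDiffOn ℝ 1 (fun x : ℝ × (ℝ × ℝ) => legendreField f x.1 x.2) (Ioo (-1) 1 ×ˢ univ) := by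
  unfold legendreField
  refine contDiffOn_snd.snd.prodMk (ContDiffOn.div (by fun_prop) (by fun_prop) ?_)
  rintro ⟨t, p⟩ ⟨⟨h1, h2⟩, -⟩
  nlinarith

lemma exists_lipschitzOnWith_legendreField (hf : ContDiff ℝ 1 f) {T : Set ℝ}
    {s : Set (ℝ × ℝ)} (hT : IsCompact T) (hT' : T ⊆ Ioo (-1) 1) (hs : IsCompact s) :
    ∃ K, ∀ t ∈ T, LipschitzOnWith K (legendreField f t) s := by
  obtain ⟨K, hK⟩ := (((contDiffOn_legendreField hf).locallyLipschitzOn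
    ((convex_Ioo _ _).prod convex_univ)).mono
    (prod_mono hT' (subset_univ s))).exists_lipschitzOnWith_of_compact (hT.prod hs)
  refine ⟨K, fun t ht => ?_⟩
  have := hK.comp (LipschitzWith.prodMk_left t).lipschitzOnWith fun p hp => mk_mem_prod ht hp
  rwa [mul_one] at this

end LegendreField

namespace IsArchSolution

variable {f : ℝ → ℝ} {R M r₁ r₂ s₁ s₂ : ℝ} {U U' U'' V V' V'' : ℝ → ℝ}

lemma Icc_subset_Ioo (h : IsArchSolution f R M r₁ r₂ U U' U'') : Icc r₁ r₂ ⊆ Ioo (-1) 1 :=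
  Set.Icc_subset_Ioo h.1 h.2.2.2.1

lemma mem_Ioo (h : IsArchSolution f R M r₁ r₂ U U' U'') : R ∈ Ioo r₁ r₂ := ⟨h.2.1, h.2.2.1⟩

lemma left_lt_right (h : IsArchSolution f R M r₁ r₂ U U' U'') : r₁ < r₂ :=
  h.mem_Ioo.1.trans h.mem_Ioo.2

lemma phase_critical (h : IsArchSolution f R M r₁ r₂ U U' U'') : (U R, U' R) = (M, 0) := by
  obtain ⟨-, -, -, -, -, -, -, -, hUR, hU'R, -⟩ := h
  rw [hUR, hU'R]

lemma reflect (h : IsArchSolution f R M r₁ r₂ U U' U'') :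
    IsArchSolution f (-R) M (-r₂) (-r₁) (fun r => U (-r)) (fun r => -U' (-r))
      (fun r => U'' (-r)) := by
  obtain ⟨h1, h2, h3, h4, hU, hU', hU''c, hode, hUR, hU'R, hUr₁, hUr₂, hpos⟩ := h
  have hneg : MapsTo Neg.neg (Icc (-r₂) (-r₁)) (Icc r₁ r₂) :=
    fun r hr => ⟨by linarith [hr.2], by linarith [hr.1]⟩
  refine ⟨by linarith, by linarith, by linarith, by linarith, fun r hr => ?_, fun r hr => ?_,
    hU''c.comp continuousOn_neg hneg, fun r hr => ?_, by simpa using hUR, by simpa using hU'R,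
    by simpa using hUr₂, by simpa using hUr₁,
    fun r hr => hpos _ ⟨by linarith [hr.2], by linarith [hr.1]⟩⟩
  · exact ((hU _ (hneg hr)).comp r (hasDerivAt_neg r).hasDerivWithinAt hneg).congr_deriv
      (mul_neg_one _)
  · exact ((hU' _ (hneg hr)).comp r (hasDerivAt_neg r).hasDerivWithinAt hneg).neg.congr_deriv
      (by ring)
  · linear_combination hode _ (hneg hr)

lemma continuousOn_phase (h : IsArchSolution f R M r₁ r₂ U U' U'') :
    ContinuousOn (fun r => (U r, U' r)) (Icc r₁ r₂) := by
  obtain ⟨-, -, -, -, hU, hU', -⟩ := h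
  exact .prodMk (fun r hr => (hU r hr).continuousWithinAt)
    (fun r hr => (hU' r hr).continuousWithinAt)

lemma hasDerivAt_phase (h : IsArchSolution f R M r₁ r₂ U U' U'') {t : ℝ} (ht : t ∈ Ioo r₁ r₂) :
    HasDerivAt (fun r => (U r, U' r)) (legendreField f t (U t, U' t)) t := by
  have htI : t ∈ Icc r₁ r₂ := Ioo_subset_Icc_self ht
  have ht' : t ∈ Ioo (-1) 1 := h.Icc_subset_Ioo htI
  obtain ⟨-, -, -, -, hU, hU', -, hode, -⟩ := h
  have hIcc : Icc r₁ r₂ ∈ nhds t := Icc_mem_nhds ht.1 ht.2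
  convert ((hU t htI).hasDerivAt hIcc).prodMk ((hU' t htI).hasDerivAt hIcc) using 1
  have hden : 1 - t ^ 2 ≠ 0 := by nlinarith [ht'.1, ht'.2]
  refine Prod.ext rfl ?_
  simp only [legendreField]
  rw [div_eq_iff hden]
  linear_combination -hode t htI

theorem eqOn_phase (hf : ContDiff ℝ 1 f) (hU : IsArchSolution f R M r₁ r₂ U U' U'')
    (hV : IsArchSolution f R M s₁ s₂ V V' V'') :
    EqOn (fun r => (U r, U' r)) (fun r => (V r, V' r)) (Icc (max r₁ s₁) (min r₂ s₂)) := by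
  have hsubU : Icc (max r₁ s₁) (min r₂ s₂) ⊆ Icc r₁ r₂ :=
    Icc_subset_Icc (le_max_left _ _) (min_le_left _ _)
  have hsubV : Icc (max r₁ s₁) (min r₂ s₂) ⊆ Icc s₁ s₂ :=
    Icc_subset_Icc (le_max_right _ _) (min_le_right _ _)
  have hUc := hU.continuousOn_phase.mono hsubU
  have hVc := hV.continuousOn_phase.mono hsubV
  obtain ⟨K, hK⟩ := exists_lipschitzOnWith_legendreField hf isCompact_Icc
    (hsubU.trans hU.Icc_subset_Ioo)
    ((isCompact_Icc.image_of_continuousOn hUc).union (isCompact_Icc.image_of_continuousOn hVc))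
  exact ODE_solution_unique_of_mem_Icc (fun t ht => hK t (Ioo_subset_Icc_self ht))
    ⟨max_lt hU.mem_Ioo.1 hV.mem_Ioo.1, lt_min hU.mem_Ioo.2 hV.mem_Ioo.2⟩
    hUc (fun t ht => hU.hasDerivAt_phase (Ioo_subset_Ioo (le_max_left _ _) (min_le_left _ _) ht))
    (fun t ht => .inl (mem_image_of_mem _ (Ioo_subset_Icc_self ht)))
    hVc (fun t ht => hV.hasDerivAt_phase (Ioo_subset_Ioo (le_max_right _ _) (min_le_right _ _) ht))
    (fun t ht => .inr (mem_image_of_mem _ (Ioo_subset_Icc_self ht)))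
    (hU.phase_critical.trans hV.phase_critical.symm)

lemma right_endpoint_le (hf : ContDiff ℝ 1 f) (hU : IsArchSolution f R M r₁ r₂ U U' U'')
    (hV : IsArchSolution f R M s₁ s₂ V V' V'') : r₂ ≤ s₂ := by
  by_contra! hlt
  have hs₂ : s₂ ∈ Ioo r₁ r₂ := ⟨hU.mem_Ioo.1.trans hV.mem_Ioo.2, hlt⟩
  have hmem : s₂ ∈ Icc (max r₁ s₁) (min r₂ s₂) :=
    ⟨max_le hs₂.1.le hV.left_lt_right.le, (min_eq_right hlt.le).ge⟩
  have hUV : U s₂ = V s₂ := congrArg Prod.fst (eqOn_phase hf hU hV hmem)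
  obtain ⟨-, -, -, -, -, -, -, -, -, -, -, -, hUpos⟩ := hU
  obtain ⟨-, -, -, -, -, -, -, -, -, -, -, hVs₂, -⟩ := hV
  linarith [hUpos s₂ hs₂]

theorem unique (hf : ContDiff ℝ 1 f) (hU : IsArchSolution f R M r₁ r₂ U U' U'')
    (hV : IsArchSolution f R M s₁ s₂ V V' V'') :
    r₁ = s₁ ∧ r₂ = s₂ ∧ EqOn (fun r => (U r, U' r)) (fun r => (V r, V' r)) (Icc r₁ r₂) := by
  have h₁ : r₁ = s₁ := by
    linarith [right_endpoint_le hf hU.reflect hV.reflect,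
      right_endpoint_le hf hV.reflect hU.reflect]
  have h₂ : r₂ = s₂ := le_antisymm (right_endpoint_le hf hU hV) (right_endpoint_le hf hV hU)
  subst h₁ h₂
  simpa using eqOn_phase hf hU hV

end IsArchSolution

theorem stmt_18_general (f : ℝ → ℝ) (hf : ContDiff ℝ 1 f)
    (M : ℝ)
    (r₁ r₂ : ℝ) (U U' U'' : ℝ → ℝ)
    (harch : IsArchSolution f 0 M r₁ r₂ U U' U'') :
    r₁ = -r₂ ∧ (1 - r₁ ^ 2) * (U' r₁) ^ 2 = (1 - r₂ ^ 2) * (U' r₂) ^ 2 := by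
  have hrefl := harch.reflect
  rw [neg_zero] at hrefl
  obtain ⟨h₁, -, hphase⟩ := harch.unique hf hrefl
  subst h₁
  have hU' : U' r₂ = -U' (-r₂) := by
    simpa using congrArg Prod.snd (hphase (right_mem_Icc.2 harch.left_lt_right.le))
  refine ⟨rfl, ?_⟩
  rw [hU']
  ring

/-- Let `f : ℝ → ℝ` be C¹ with `f(x) > 0` for all `x > 0` and `f(0) ≥ 0`,
and let `M > 0`. Let `(r₁, r₂, U)` be an arch solution with parameters `(0, M)` (i.e. the
critical height `R` equals `0`). Then `r₁ = -r₂` and the squared gradient norms at the two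
zeros coincide: `(1 - r₁²)·U'(r₁)² = (1 - r₂²)·U'(r₂)²`. -/
theorem stmt_18 (f : ℝ → ℝ) (hf : ContDiff ℝ 1 f)
    (hfpos : ∀ x : ℝ, 0 < x → 0 < f x) (hf0 : 0 ≤ f 0)
    (M : ℝ) (hM : 0 < M)
    (r₁ r₂ : ℝ) (U U' U'' : ℝ → ℝ)
    (harch : IsArchSolution f 0 M r₁ r₂ U U' U'') :
    r₁ = -r₂ ∧ (1 - r₁ ^ 2) * (U' r₁) ^ 2 = (1 - r₂ ^ 2) * (U' r₂) ^ 2 :=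
  stmt_18_general f hf M r₁ r₂ U U' U'' harch
end
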